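/- Let γ: (-2ε,2ε) → E be piecewise C² (with corner at 0), set M₁ = sup_{u ∈ (-2ε,2ε) \ {0}} ‖γ′(u)‖ and M₂ = sup_{u ∈ (-2ε,2ε) \ {0}} ‖γ″(u)‖ (both assumed finite), and set S₁ = sup_ℝ |σ′| and S₂ = sup_ℝ |σ″|. Then for every δ ∈ (0,ε] and every t ∈ (-ε,ε) with |t| > δ²/100, ‖γ_δ″(t)‖ ≤ (1 + δ·S₁)²·M₂ + S₂·M₁; i.e., away from the interval [-δ²/100, δ²/100] the second derivatives of the mollified paths are bounded by a constant independent of δ. -/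

import Mathlib

open MeasureTheory Set

/-- The variable mollification scale `σ_δ(t) = δ² σ(t/δ)`. -/
noncomputable def sigmaDel (σ : ℝ → ℝ) (δ t : ℝ) : ℝ := δ ^ 2 * σ (t / δ)

/-- The variable-scale mollification `γ_δ(s) = ∫ γ(s - σ_δ(s) t) φ(t) dt` (Bochner integral). -/
noncomputable def mollify {E : Type*} [NormedAddCommGroup E] [NormedSpace ℝ E]
    (φ σ : ℝ → ℝ) (δ : ℝ) (γ : ℝ → E) (s : ℝ) : E :=
  ∫ t : ℝ, φ t • γ (s - sigmaDel σ δ s * t)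

open Filter Topology

/-! Write `p = s - σ_δ(s) u`. When `|s| > δ²/100 ≥ sup σ_δ`, every `p` with `|u| ≤ 1` lies in the
punctured interval, where `γ` is `C²`, so one may differentiate twice under the integral sign:
`γ_δ'(s) = ∫ φ(u) (1 - σ_δ'(s) u) γ'(p) du` and
`γ_δ''(s) = ∫ φ(u) ((1 - σ_δ'(s) u)² γ''(p) - σ_δ''(s) u γ'(p)) du`.
Since `|σ_δ'| ≤ δ S₁`, `|σ_δ''| ≤ S₂`, `φ ≥ 0` and `∫ φ = 1`, the bound follows. -/

section ParametricIntegral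

variable {X E : Type*} [TopologicalSpace X] [T2Space X] [MeasurableSpace X]
  [OpensMeasurableSpace X] {μ : Measure X} [IsFiniteMeasureOnCompacts μ]
  [NormedAddCommGroup E] [NormedSpace ℝ E]

theorem integrable_smul_of_support_subset {φ : X → ℝ} {f : X → E} {s : Set X}
    (hs : IsCompact s) (hφ : Continuous φ) (hφs : Function.support φ ⊆ s) (hf : ContinuousOn f s) :
    Integrable (fun u => φ u • f u) μ := by
  have hsupp : Function.support (fun u => φ u • f u) ⊆ s :=
    (Function.support_smul_subset_left φ f).trans hφs
  rw [← indicator_eq_self.2 hsupp, integrable_indicator_iff hs.measurableSet]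
  exact (hφ.continuousOn.smul hf).integrableOn_compact hs

theorem hasDerivAt_integral_smul_of_support_subset {φ : X → ℝ} {F F' : ℝ → X → E}
    {s : Set X} {U : Set ℝ} {x₀ C : ℝ} (hs : IsCompact s) (hφ : Continuous φ)
    (hφs : Function.support φ ⊆ s) (hU : U ∈ 𝓝 x₀) (hF : ∀ x ∈ U, ContinuousOn (F x) s)
    (hF' : AEStronglyMeasurable (F' x₀) μ)
    (hderiv : ∀ x ∈ U, ∀ u ∈ s, HasDerivAt (F · u) (F' x u) x)
    (hbound : ∀ x ∈ U, ∀ u ∈ s, ‖F' x u‖ ≤ C) :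
    HasDerivAt (fun x => ∫ u, φ u • F x u ∂μ) (∫ u, φ u • F' x₀ u ∂μ) x₀ := by
  have hφ0 : ∀ u ∉ s, φ u = 0 := fun u hu => Function.notMem_support.1 fun h => hu (hφs h)
  refine (hasDerivAt_integral_of_dominated_loc_of_deriv_le (F := fun x u => φ u • F x u)
    (F' := fun x u => φ u • F' x u) (bound := fun u => ‖φ u‖ * C) hU
    (eventually_of_mem hU fun x hx =>
      (integrable_smul_of_support_subset hs hφ hφs (hF x hx)).aestronglyMeasurable)
    (integrable_smul_of_support_subset hs hφ hφs (hF x₀ (mem_of_mem_nhds hU)))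
    (hφ.aestronglyMeasurable.smul hF') (ae_of_all _ fun u x hx => ?_)
    ((hφ.integrable_of_hasCompactSupport (.of_support_subset_isCompact hs hφs)).norm.mul_const C)
    (ae_of_all _ fun u x hx => ?_)).2
  · by_cases hu : u ∈ s
    · rw [norm_smul]
      exact mul_le_mul_of_nonneg_left (hbound x hx u hu) (norm_nonneg _)
    · simp [hφ0 u hu]
  · by_cases hu : u ∈ s
    · exact (hderiv x hx u hu).const_smul (φ u)
    · simpa [hφ0 u hu] using hasDerivAt_const x (0 : E)

end ParametricIntegral

theorem abs_mul_le_of_mem_Icc {a A u : ℝ} (ha : |a| ≤ A) (hu : u ∈ Icc (-1 : ℝ) 1) :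
    |a * u| ≤ A := by
  rw [abs_mul]
  simpa using mul_le_mul ha (abs_le.2 hu) (abs_nonneg u) ((abs_nonneg a).trans ha)

theorem abs_one_sub_mul_le {a A u : ℝ} (ha : |a| ≤ A) (hu : u ∈ Icc (-1 : ℝ) 1) :
    |1 - a * u| ≤ 1 + A := by
  calc |1 - a * u| ≤ |1| + |a * u| := abs_sub _ _
    _ ≤ 1 + A := by rw [abs_one]; linarith [abs_mul_le_of_mem_Icc ha hu]

theorem sub_mul_mem_Ioo_diff_zero {x b a r u : ℝ} (hx : |x| < r) (hax : a < |x|) (hb : |b| ≤ a)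
    (hu : u ∈ Icc (-1 : ℝ) 1) : x - b * u ∈ Ioo (-(2 * r)) (2 * r) \ {0} := by
  have hbu := abs_mul_le_of_mem_Icc hb hu
  obtain ⟨hbu₁, hbu₂⟩ := abs_le.1 hbu
  obtain ⟨hx₁, hx₂⟩ := abs_lt.1 hx
  refine ⟨⟨by linarith, by linarith⟩, fun h => ?_⟩
  rw [mem_singleton_iff, sub_eq_zero] at h
  rw [h] at hax
  linarith

section VariableScaleMollification

variable {E : Type*} [NormedAddCommGroup E] [NormedSpace ℝ E]

theorem norm_one_sub_mul_smul_add_le {a b A B u M₁ M₂ : ℝ} {v w : E} (ha : |a| ≤ A)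
    (hb : |b| ≤ B) (hu : u ∈ Icc (-1 : ℝ) 1) (hv : ‖v‖ ≤ M₁) (hw : ‖w‖ ≤ M₂) :
    ‖(1 - a * u) • (1 - a * u) • w + (-(b * u)) • v‖ ≤ (1 + A) ^ 2 * M₂ + B * M₁ := by
  have hau := abs_one_sub_mul_le ha hu
  have hbu : |-(b * u)| ≤ B := (abs_neg (b * u)).trans_le (abs_mul_le_of_mem_Icc hb hu)
  have hA : 0 ≤ 1 + A := (abs_nonneg _).trans hau
  calc ‖(1 - a * u) • (1 - a * u) • w + (-(b * u)) • v‖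
        ≤ |1 - a * u| * (|1 - a * u| * ‖w‖) + |-(b * u)| * ‖v‖ := by
        simpa only [norm_smul, Real.norm_eq_abs] using
          norm_add_le ((1 - a * u) • (1 - a * u) • w) ((-(b * u)) • v)
    _ ≤ (1 + A) * ((1 + A) * M₂) + B * M₁ := by gcongr; exact (abs_nonneg _).trans hbu
    _ = (1 + A) ^ 2 * M₂ + B * M₁ := by ring

theorem HasDerivAt.comp_sub_mul {g : ℝ → E} {g' : E} {τ : ℝ → ℝ} {τ' x u : ℝ}
    (hg : HasDerivAt g g' (x - τ x * u)) (hτ : HasDerivAt τ τ' x) :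
    HasDerivAt (fun y => g (y - τ y * u)) ((1 - τ' * u) • g') x :=
  hg.scomp x ((hasDerivAt_id x).sub (hτ.mul_const u))

theorem continuousOn_comp_sub_mul {F : Type*} [TopologicalSpace F] {g : ℝ → F} {b x : ℝ}
    {s V : Set ℝ}
    (hg : ∀ p ∈ V, ContinuousAt g p) (hV : ∀ u ∈ s, x - b * u ∈ V) :
    ContinuousOn (fun u => g (x - b * u)) s :=
  fun u hu => (hg _ (hV u hu)).comp_continuousWithinAt (f := fun u => x - b * u) (by fun_prop)

theorem aestronglyMeasurable_deriv_comp_sub_mul [CompleteSpace E] (g : ℝ → E) (b x : ℝ)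
    {μ : Measure ℝ} :
    AEStronglyMeasurable (fun u => deriv g (x - b * u)) μ :=
  ((stronglyMeasurable_deriv g).comp_measurable (by fun_prop)).aestronglyMeasurable

theorem hasDerivAt_deriv_of_forall_hasDerivAt {f f' f'' : ℝ → E} {V : Set ℝ} (hV : IsOpen V)
    (hf : ∀ p ∈ V, HasDerivAt f (f' p) p) (hf' : ∀ p ∈ V, HasDerivAt f' (f'' p) p) {p : ℝ}
    (hp : p ∈ V) : HasDerivAt (deriv f) (f'' p) p :=
  (hf' p hp).congr_of_eventuallyEq
    (eventually_of_mem (hV.mem_nhds hp) fun q hq => (hf q hq).deriv)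

-- The integrands use `deriv γ` and `deriv (deriv γ)`, which are measurable everywhere, whereas
-- derivatives given as arbitrary functions are only controlled on `V`.
variable [CompleteSpace E] {φ τ τ' τ'' : ℝ → ℝ} {γ : ℝ → E} {U V : Set ℝ} {A B M₁ M₂ : ℝ}

theorem hasDerivAt_integral_comp_sub_mul {x₀ : ℝ} (hφ : Continuous φ)
    (hφs : Function.support φ ⊆ Icc (-1) 1) (hU : U ∈ 𝓝 x₀)
    (hUV : ∀ x ∈ U, ∀ u ∈ Icc (-1 : ℝ) 1, x - τ x * u ∈ V)
    (hτ : ∀ x ∈ U, HasDerivAt τ (τ' x) x) (hA : ∀ x ∈ U, |τ' x| ≤ A)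
    (hγ : ∀ p ∈ V, DifferentiableAt ℝ γ p) (hM₁ : ∀ p ∈ V, ‖deriv γ p‖ ≤ M₁) :
    HasDerivAt (fun x => ∫ u, φ u • γ (x - τ x * u))
      (∫ u, φ u • (1 - τ' x₀ * u) • deriv γ (x₀ - τ x₀ * u)) x₀ := by
  refine hasDerivAt_integral_smul_of_support_subset (C := (1 + A) * M₁) isCompact_Icc hφ hφs hU
    (fun x hx => continuousOn_comp_sub_mul (fun p hp => (hγ p hp).continuousAt) (hUV x hx))
    ((by fun_prop : Continuous fun u => 1 - τ' x₀ * u).aestronglyMeasurable.smul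
      (aestronglyMeasurable_deriv_comp_sub_mul γ _ _))
    (fun x hx u hu => (hγ _ (hUV x hx u hu)).hasDerivAt.comp_sub_mul (hτ x hx))
    (fun x hx u hu => ?_)
  have hA₀ : 0 ≤ 1 + A := by linarith [(abs_nonneg _).trans (hA x hx)]
  rw [norm_smul, Real.norm_eq_abs]
  exact mul_le_mul (abs_one_sub_mul_le (hA x hx) hu) (hM₁ _ (hUV x hx u hu)) (norm_nonneg _) hA₀

theorem hasDerivAt_integral_smul_deriv_comp_sub_mul {x₀ : ℝ} (hφ : Continuous φ)
    (hφs : Function.support φ ⊆ Icc (-1) 1) (hU : U ∈ 𝓝 x₀)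
    (hUV : ∀ x ∈ U, ∀ u ∈ Icc (-1 : ℝ) 1, x - τ x * u ∈ V)
    (hτ : ∀ x ∈ U, HasDerivAt τ (τ' x) x) (hτ' : ∀ x ∈ U, HasDerivAt τ' (τ'' x) x)
    (hA : ∀ x ∈ U, |τ' x| ≤ A) (hB : ∀ x ∈ U, |τ'' x| ≤ B)
    (hγ' : ∀ p ∈ V, DifferentiableAt ℝ (deriv γ) p) (hM₁ : ∀ p ∈ V, ‖deriv γ p‖ ≤ M₁)
    (hM₂ : ∀ p ∈ V, ‖deriv (deriv γ) p‖ ≤ M₂) :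
    HasDerivAt (fun x => ∫ u, φ u • (1 - τ' x * u) • deriv γ (x - τ x * u))
      (∫ u, φ u • ((1 - τ' x₀ * u) • (1 - τ' x₀ * u) • deriv (deriv γ) (x₀ - τ x₀ * u) +
        (-(τ'' x₀ * u)) • deriv γ (x₀ - τ x₀ * u))) x₀ := by
  refine hasDerivAt_integral_smul_of_support_subset (C := (1 + A) ^ 2 * M₂ + B * M₁)
    isCompact_Icc hφ hφs hU
    (fun x hx => (by fun_prop : Continuous fun u => 1 - τ' x * u).continuousOn.smul
      (continuousOn_comp_sub_mul (fun p hp => (hγ' p hp).continuousAt) (hUV x hx)))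
    (((by fun_prop : Continuous fun u => 1 - τ' x₀ * u).aestronglyMeasurable.smul
      ((by fun_prop : Continuous fun u => 1 - τ' x₀ * u).aestronglyMeasurable.smul
        (aestronglyMeasurable_deriv_comp_sub_mul (deriv γ) _ _))).add
      ((by fun_prop : Continuous fun u => -(τ'' x₀ * u)).aestronglyMeasurable.smul
        (aestronglyMeasurable_deriv_comp_sub_mul γ _ _)))
    (fun x hx u hu => ((hτ' x hx).mul_const u).const_sub 1 |>.smul
      ((hγ' _ (hUV x hx u hu)).hasDerivAt.comp_sub_mul (hτ x hx)))
    (fun x hx u hu => ?_)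
  exact norm_one_sub_mul_smul_add_le (hA x hx) (hB x hx) hu (hM₁ _ (hUV x hx u hu))
    (hM₂ _ (hUV x hx u hu))

theorem norm_deriv_deriv_integral_comp_sub_mul_le {t : ℝ} (hφ : Continuous φ)
    (hφs : Function.support φ ⊆ Icc (-1) 1) (hφ₀ : ∀ u, 0 ≤ φ u) (hφint : ∫ u, φ u = 1)
    (hU : IsOpen U) (ht : t ∈ U) (hUV : ∀ x ∈ U, ∀ u ∈ Icc (-1 : ℝ) 1, x - τ x * u ∈ V)
    (hτ : ∀ x ∈ U, HasDerivAt τ (τ' x) x) (hτ' : ∀ x ∈ U, HasDerivAt τ' (τ'' x) x)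
    (hA : ∀ x ∈ U, |τ' x| ≤ A) (hB : ∀ x ∈ U, |τ'' x| ≤ B)
    (hγ : ∀ p ∈ V, DifferentiableAt ℝ γ p) (hγ' : ∀ p ∈ V, DifferentiableAt ℝ (deriv γ) p)
    (hM₁ : ∀ p ∈ V, ‖deriv γ p‖ ≤ M₁) (hM₂ : ∀ p ∈ V, ‖deriv (deriv γ) p‖ ≤ M₂) :
    ‖deriv (deriv fun x => ∫ u, φ u • γ (x - τ x * u)) t‖ ≤ (1 + A) ^ 2 * M₂ + B * M₁ := by
  have hderiv : deriv (fun x => ∫ u, φ u • γ (x - τ x * u)) =ᶠ[𝓝 t]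
      fun x => ∫ u, φ u • (1 - τ' x * u) • deriv γ (x - τ x * u) :=
    eventually_of_mem (hU.mem_nhds ht) fun x hx =>
      (hasDerivAt_integral_comp_sub_mul hφ hφs (hU.mem_nhds hx) hUV hτ hA hγ hM₁).deriv
  rw [hderiv.deriv_eq, (hasDerivAt_integral_smul_deriv_comp_sub_mul hφ hφs (hU.mem_nhds ht)
    hUV hτ hτ' hA hB hγ' hM₁ hM₂).deriv]
  have hφint' : Integrable φ :=
    hφ.integrable_of_hasCompactSupport (.of_support_subset_isCompact isCompact_Icc hφs)
  calc _ ≤ ∫ u, φ u * ((1 + A) ^ 2 * M₂ + B * M₁) :=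
        norm_integral_le_of_norm_le (hφint'.mul_const _) (ae_of_all _ fun u => ?_)
    _ = (1 + A) ^ 2 * M₂ + B * M₁ := by rw [integral_mul_const, hφint, one_mul]
  by_cases hu : u ∈ Icc (-1 : ℝ) 1
  · rw [norm_smul, Real.norm_of_nonneg (hφ₀ u)]
    exact mul_le_mul_of_nonneg_left (norm_one_sub_mul_smul_add_le (hA t ht) (hB t ht) hu
      (hM₁ _ (hUV t ht u hu)) (hM₂ _ (hUV t ht u hu))) (hφ₀ u)
  · simp [Function.notMem_support.1 fun h => hu (hφs h)]

end VariableScaleMollification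

theorem abs_deriv_le_iSup_abs_deriv {f : ℝ → ℝ} (hf : ContDiff ℝ 1 f)
    (hfc : HasCompactSupport f) (x : ℝ) : |deriv f x| ≤ ⨆ y, |deriv f y| :=
  le_ciSup ((hf.continuous_deriv le_rfl).abs.bddAbove_range_of_hasCompactSupport
    (hfc.deriv.comp_left abs_zero)) x

theorem hasDerivAt_mul_comp_div {f : ℝ → ℝ} {c x : ℝ} (hc : c ≠ 0)
    (hf : DifferentiableAt ℝ f (x / c)) :
    HasDerivAt (fun y => c * f (y / c)) (deriv f (x / c)) x :=
  ((hf.hasDerivAt.comp x ((hasDerivAt_id x).div_const c)).const_mul c).congr_deriv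
    (by field_simp)

theorem hasDerivAt_sigmaDel {σ : ℝ → ℝ} {δ : ℝ} (hδ : δ ≠ 0) (hσ : Differentiable ℝ σ) (x : ℝ) :
    HasDerivAt (sigmaDel σ δ) (δ * deriv σ (x / δ)) x := by
  have hσδ : sigmaDel σ δ = fun y => δ * (δ * σ (y / δ)) := by
    ext y
    rw [sigmaDel, sq, mul_assoc]
  exact hσδ ▸ (hasDerivAt_mul_comp_div hδ (hσ _)).const_mul δ

theorem abs_sigmaDel_le {σ : ℝ → ℝ} {δ : ℝ} (hσ₀ : ∀ t, 0 ≤ σ t) (hσle : ∀ t, σ t ≤ 1/100)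
    (x : ℝ) : |sigmaDel σ δ x| ≤ δ ^ 2 / 100 := by
  rw [sigmaDel, abs_of_nonneg (mul_nonneg (sq_nonneg δ) (hσ₀ _))]
  nlinarith [hσle (x / δ), sq_nonneg δ]

theorem mollify_second_deriv_bound_away_from_corner_general
    {E : Type*} [NormedAddCommGroup E] [NormedSpace ℝ E] [CompleteSpace E]
    (ε : ℝ)
    (φ σ : ℝ → ℝ)
    (hφsm : ContDiff ℝ (⊤ : ℕ∞) φ) (hφsupp : Function.support φ ⊆ Set.Icc (-1) 1)
    (hφ0 : ∀ t, 0 ≤ φ t) (hφint : (∫ t : ℝ, φ t) = 1)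
    (hσsm : ContDiff ℝ (⊤ : ℕ∞) σ) (hσsupp : Function.support σ ⊆ Set.Icc (-(1/2)) (1/2))
    (hσ0 : ∀ t, 0 ≤ σ t) (hσle : ∀ t, σ t ≤ 1/100)
    (γ : ℝ → E)
    (γ' : ℝ → E)
    (hγ'1 : ∀ u ∈ Set.Ioo (-(2*ε)) (2*ε), u ≠ 0 → HasDerivAt γ (γ' u) u)
    (γ'' : ℝ → E)
    (hγ''1 : ∀ u ∈ Set.Ioo (-(2*ε)) (2*ε), u ≠ 0 → HasDerivAt γ' (γ'' u) u)
    (M₁ M₂ S₁ S₂ : ℝ)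
    (hM₁ : M₁ = sSup ((fun u => ‖γ' u‖) '' (Set.Ioo (-(2*ε)) (2*ε) \ {0})))
    (hM₁bd : BddAbove ((fun u => ‖γ' u‖) '' (Set.Ioo (-(2*ε)) (2*ε) \ {0})))
    (hM₂ : M₂ = sSup ((fun u => ‖γ'' u‖) '' (Set.Ioo (-(2*ε)) (2*ε) \ {0})))
    (hM₂bd : BddAbove ((fun u => ‖γ'' u‖) '' (Set.Ioo (-(2*ε)) (2*ε) \ {0})))
    (hS₁ : S₁ = ⨆ u : ℝ, |deriv σ u|)
    (hS₂ : S₂ = ⨆ u : ℝ, |deriv (deriv σ) u|)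
    (δ : ℝ) (hδ0 : 0 < δ)
 :
    ∀ t ∈ Set.Ioo (-ε) ε, δ^2/100 < |t| →
      ‖deriv (deriv (mollify φ σ δ γ)) t‖ ≤ (1 + δ * S₁)^2 * M₂ + S₂ * M₁ := by
  intro t ht htδ
  set V := Ioo (-(2 * ε)) (2 * ε) \ {0}
  have hγ' : ∀ p ∈ V, HasDerivAt γ (γ' p) p := fun p hp => hγ'1 p hp.1 hp.2
  have hγ'' : ∀ p ∈ V, HasDerivAt (deriv γ) (γ'' p) p :=
    fun p => hasDerivAt_deriv_of_forall_hasDerivAt (isOpen_Ioo.sdiff isClosed_singleton) hγ'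
      fun q hq => hγ''1 q hq.1 hq.2
  have hσc : HasCompactSupport σ := .of_support_subset_isCompact isCompact_Icc hσsupp
  have hσ₁ : ContDiff ℝ 2 σ := hσsm.of_le (WithTop.coe_le_coe.2 le_top)
  have hS₁σ : ∀ x, |deriv σ x| ≤ S₁ :=
    hS₁ ▸ abs_deriv_le_iSup_abs_deriv (hσ₁.of_le one_le_two) hσc
  have hS₂σ : ∀ x, |deriv (deriv σ) x| ≤ S₂ :=
    hS₂ ▸ abs_deriv_le_iSup_abs_deriv hσ₁.deriv' hσc.deriv
  refine norm_deriv_deriv_integral_comp_sub_mul_le (U := Ioo (-ε) ε ∩ {s | δ ^ 2 / 100 < |s|})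
    (τ' := fun x => δ * deriv σ (x / δ)) (τ'' := fun x => deriv (deriv σ) (x / δ))
    hφsm.continuous hφsupp hφ0 hφint
    (isOpen_Ioo.inter (isOpen_lt continuous_const continuous_abs)) ⟨ht, htδ⟩
    (fun x hx u hu => sub_mul_mem_Ioo_diff_zero (abs_lt.2 hx.1) hx.2
      (abs_sigmaDel_le hσ0 hσle x) hu)
    (fun x _ => hasDerivAt_sigmaDel hδ0.ne' (hσ₁.differentiable two_ne_zero) x)
    (fun x _ => hasDerivAt_mul_comp_div hδ0.ne' ?_)
    (fun x _ => ?_) (fun x _ => hS₂σ _)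
    (fun p hp => (hγ' p hp).differentiableAt) (fun p hp => (hγ'' p hp).differentiableAt)
    (fun p hp => ?_) (fun p hp => ?_)
  · exact (hσ₁.deriv').differentiable one_ne_zero _
  · rw [abs_mul, abs_of_pos hδ0]
    exact mul_le_mul_of_nonneg_left (hS₁σ _) hδ0.le
  · rw [(hγ' p hp).deriv, hM₁]
    exact le_csSup hM₁bd (mem_image_of_mem _ hp)
  · rw [(hγ'' p hp).deriv, hM₂]
    exact le_csSup hM₂bd (mem_image_of_mem _ hp)

theorem mollify_second_deriv_bound_away_from_corner
    {E : Type*} [NormedAddCommGroup E] [NormedSpace ℝ E] [CompleteSpace E]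
    (ε : ℝ) (hε0 : 0 < ε) (hε1 : ε ≤ 1)
    (φ σ : ℝ → ℝ)
    (hφsm : ContDiff ℝ (⊤ : ℕ∞) φ) (hφsupp : Function.support φ ⊆ Set.Icc (-1) 1)
    (hφ0 : ∀ t, 0 ≤ φ t) (hφ1 : ∀ t, φ t ≤ 1) (hφint : (∫ t : ℝ, φ t) = 1)
    (hσsm : ContDiff ℝ (⊤ : ℕ∞) σ) (hσsupp : Function.support σ ⊆ Set.Icc (-(1/2)) (1/2))
    (hσ0 : ∀ t, 0 ≤ σ t) (hσle : ∀ t, σ t ≤ 1/100)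
    (hσeq : ∀ t : ℝ, |t| ≤ 1/4 → σ t = 1/100)
    (hσpos : ∀ t : ℝ, 1/4 < |t| → |t| < 1/2 → 0 < σ t)
    (γ : ℝ → E)
    (hγcont : ContinuousOn γ (Set.Ioo (-(2*ε)) (2*ε)))
    (hγm : ContDiffOn ℝ 2 γ (Set.Ioc (-(2*ε)) 0))
    (hγp : ContDiffOn ℝ 2 γ (Set.Ico 0 (2*ε)))
    (γ' : ℝ → E)
    (hγ'1 : ∀ u ∈ Set.Ioo (-(2*ε)) (2*ε), u ≠ 0 → HasDerivAt γ (γ' u) u)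
    (hγ'0 : HasDerivWithinAt γ (γ' 0) (Set.Ici 0) 0)
    (γ'' : ℝ → E)
    (hγ''1 : ∀ u ∈ Set.Ioo (-(2*ε)) (2*ε), u ≠ 0 → HasDerivAt γ' (γ'' u) u)
    (hγ''0 : HasDerivWithinAt γ' (γ'' 0) (Set.Ici 0) 0)
    (M₁ M₂ S₁ S₂ : ℝ)
    (hM₁ : M₁ = sSup ((fun u => ‖γ' u‖) '' (Set.Ioo (-(2*ε)) (2*ε) \ {0})))
    (hM₁bd : BddAbove ((fun u => ‖γ' u‖) '' (Set.Ioo (-(2*ε)) (2*ε) \ {0})))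
    (hM₂ : M₂ = sSup ((fun u => ‖γ'' u‖) '' (Set.Ioo (-(2*ε)) (2*ε) \ {0})))
    (hM₂bd : BddAbove ((fun u => ‖γ'' u‖) '' (Set.Ioo (-(2*ε)) (2*ε) \ {0})))
    (hS₁ : S₁ = ⨆ u : ℝ, |deriv σ u|)
    (hS₂ : S₂ = ⨆ u : ℝ, |deriv (deriv σ) u|)
    (δ : ℝ) (hδ0 : 0 < δ) (hδε : δ ≤ ε)
 :
    ∀ t ∈ Set.Ioo (-ε) ε, δ^2/100 < |t| →
      ‖deriv (deriv (mollify φ σ δ γ)) t‖ ≤ (1 + δ * S₁)^2 * M₂ + S₂ * M₁ :=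
  mollify_second_deriv_bound_away_from_corner_general ε φ σ hφsm hφsupp hφ0 hφint hσsm hσsupp hσ0
    hσle γ γ' hγ'1 γ'' hγ''1 M₁ M₂ S₁ S₂ hM₁ hM₁bd hM₂ hM₂bd hS₁ hS₂ δ hδ0
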